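/- arXiv:2303.03452 — 4 statements merged into one kernel-verified Lean document; each statement's English description precedes it below -/
import Mathlib

section
/- For every natural number n ≥ 1, consider ℝ^{n+1} equipped with the quadratic form Q(s) = −s₁² + s₂² + ⋯ + s_{n+1}² of signature (n,1), with associated symmetric bilinear form B. Then there exists a linearly independent family of vectors a₁, …, a_{n+1} in ℝ^{n+1} such that Q(aᵢ) = 0 for every i and B(aᵢ, aⱼ) = −1/2 for all i ≠ j; that is, ℝ^{n+1} with the form of signature (n,1) admits a basis of negatively correlated null vectors. -/
/-- `ℝ^{n+1}` with the form of signature `(n,1)`,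
`B(x,y) = −x₁y₁ + x₂y₂ + ⋯ + x_{n+1}y_{n+1}`, admits a linearly independent family of
`n+1` null vectors that are pairwise negatively correlated with inner product `−1/2`. -/
theorem stmt_1 (n : ℕ) (hn : 1 ≤ n)
    (B : (Fin (n + 1) → ℝ) → (Fin (n + 1) → ℝ) → ℝ)
    (hB : ∀ x y, B x y =
      -(x 0 * y 0) + ∑ k ∈ Finset.univ.erase (0 : Fin (n + 1)), x k * y k) :
    ∃ a : Fin (n + 1) → (Fin (n + 1) → ℝ),
      LinearIndependent ℝ a ∧
      (∀ i, B (a i) (a i) = 0) ∧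
      (∀ i j, i ≠ j → B (a i) (a j) = -(1 / 2)) := by
  have hc2 : Real.sqrt 2 ^ 2 = 2 := Real.sq_sqrt (by norm_num)
  set c : ℝ := Real.sqrt 2 with hcdef
  have hcpos : 0 < c := Real.sqrt_pos.mpr (by norm_num)
  set d : ℝ := Real.sqrt n with hddef
  have hd2 : d ^ 2 = n := Real.sq_sqrt (Nat.cast_nonneg n)
  have hd0 : 0 ≤ d := Real.sqrt_nonneg _
  have hd1 : (0:ℝ) < d + 1 := by linarith
  set x : ℝ := d / (c * (d + 1)) with hxdef
  set z : ℝ := -(1 / (c * (d + 1))) with hzdef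
  set a : Fin (n + 1) → (Fin (n + 1) → ℝ) := fun i k =>
    if i = 0 then (if k = 0 then x else z)
    else (if k = 0 then 1 / c else if k = i then 1 / c else 0) with hadef
  have hne : c * (d + 1) ≠ 0 := by positivity
  have ha00 : a 0 0 = x := by simp [hadef]
  have ha0 : ∀ k : Fin (n+1), k ≠ 0 → a 0 k = z := by
    intro k hk; simp [hadef, hk]
  have hai0 : ∀ i : Fin (n+1), i ≠ 0 → a i 0 = 1 / c := by
    intro i hi; simp [hadef, hi]
  have hai : ∀ i k : Fin (n+1), i ≠ 0 → k ≠ 0 →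
      a i k = if k = i then 1 / c else 0 := by
    intro i k hi hk; simp [hadef, hi, hk]
  have hcard : (Finset.univ.erase (0 : Fin (n + 1))).card = n := by
    rw [Finset.card_erase_of_mem (Finset.mem_univ _), Finset.card_univ, Fintype.card_fin]
    simp
  have hG : ∀ i j, B (a i) (a j) = if i = j then 0 else -(1 / 2) := by
    intro i j
    rw [hB]
    by_cases hi : i = 0 <;> by_cases hj : j = 0
    · subst hi; subst hj
      have h1 : ∑ k ∈ Finset.univ.erase (0 : Fin (n+1)), a 0 k * a 0 k
          = ∑ _k ∈ Finset.univ.erase (0 : Fin (n+1)), z * z := by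
        refine Finset.sum_congr rfl fun k hk => ?_
        rw [ha0 k (Finset.mem_erase.mp hk).1]
      rw [h1, ha00, Finset.sum_const, hcard, if_pos rfl, nsmul_eq_mul, hxdef, hzdef]
      field_simp
      nlinarith [hd2, hc2]
    · subst hi
      have h1 : ∑ k ∈ Finset.univ.erase (0 : Fin (n+1)), a 0 k * a j k
          = ∑ k ∈ Finset.univ.erase (0 : Fin (n+1)),
              (if k = j then z * (1 / c) else 0) := by
        refine Finset.sum_congr rfl fun k hk => ?_
        have hk0 := (Finset.mem_erase.mp hk).1
        rw [ha0 k hk0, hai j k hj hk0]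
        by_cases h : k = j <;> simp [h]
      rw [h1, ha00, hai0 j hj, Finset.sum_ite_eq' _ j fun _ => z * (1 / c),
        if_pos (by simp [hj]), if_neg fun h => hj h.symm, hxdef, hzdef]
      field_simp
      nlinarith [hd2, hc2]
    · subst hj
      have h1 : ∑ k ∈ Finset.univ.erase (0 : Fin (n+1)), a i k * a 0 k
          = ∑ k ∈ Finset.univ.erase (0 : Fin (n+1)),
              (if k = i then (1 / c) * z else 0) := by
        refine Finset.sum_congr rfl fun k hk => ?_
        have hk0 := (Finset.mem_erase.mp hk).1
        rw [ha0 k hk0, hai i k hi hk0]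
        by_cases h : k = i <;> simp [h]
      rw [h1, ha00, hai0 i hi, Finset.sum_ite_eq' _ i fun _ => (1 / c) * z,
        if_pos (by simp [hi]), if_neg hi, hxdef, hzdef]
      field_simp
      nlinarith [hd2, hc2]
    · by_cases hij : i = j
      · subst hij
        have h1 : ∑ k ∈ Finset.univ.erase (0 : Fin (n+1)), a i k * a i k
            = ∑ k ∈ Finset.univ.erase (0 : Fin (n+1)),
                (if k = i then (1 / c) * (1 / c) else 0) := by
          refine Finset.sum_congr rfl fun k hk => ?_
          have hk0 := (Finset.mem_erase.mp hk).1
          rw [hai i k hi hk0]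
          by_cases h : k = i <;> simp [h]
        rw [h1, hai0 i hi, Finset.sum_ite_eq' _ i fun _ => (1 / c) * (1 / c),
          if_pos (by simp [hi]), if_pos rfl]
        ring
      · have h1 : ∑ k ∈ Finset.univ.erase (0 : Fin (n+1)), a i k * a j k
            = ∑ _k ∈ Finset.univ.erase (0 : Fin (n+1)), (0:ℝ) := by
          refine Finset.sum_congr rfl fun k hk => ?_
          have hk0 := (Finset.mem_erase.mp hk).1
          rw [hai i k hi hk0, hai j k hj hk0]
          by_cases h : k = i <;> simp [h, hij]
        rw [h1, hai0 i hi, hai0 j hj, Finset.sum_const, smul_zero, if_neg hij]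
        have : c * c = 2 := by nlinarith [hc2]
        field_simp
        linarith [this]
  have hlin : ∀ (g : Fin (n+1) → ℝ) (y : Fin (n+1) → ℝ),
      B (∑ i, g i • a i) y = ∑ i, g i * B (a i) y := by
    intro g y
    have hRHS : ∑ i, g i * B (a i) y
        = ∑ i, (-(g i * (a i 0 * y 0)) +
            ∑ k ∈ Finset.univ.erase (0 : Fin (n+1)), g i * (a i k * y k)) := by
      refine Finset.sum_congr rfl fun i _ => ?_
      rw [hB, mul_add, mul_neg, Finset.mul_sum]
    rw [hRHS, hB]
    simp only [Finset.sum_apply, Pi.smul_apply, smul_eq_mul]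
    rw [Finset.sum_add_distrib, Finset.sum_comm (s := Finset.univ)]
    congr 1
    · rw [Finset.sum_mul, ← Finset.sum_neg_distrib]
      exact Finset.sum_congr rfl fun i _ => by ring
    · refine Finset.sum_congr rfl fun k _ => ?_
      rw [Finset.sum_mul]
      exact Finset.sum_congr rfl fun i _ => by ring
  have hB0 : ∀ y, B 0 y = 0 := by
    intro y
    rw [hB]
    simp
  refine ⟨a, ?_, fun i => by rw [hG, if_pos rfl], fun i j hij => by rw [hG, if_neg hij]⟩
  rw [Fintype.linearIndependent_iff]
  intro g hg
  have h0 : ∀ j, ∑ i, g i * B (a i) (a j) = 0 := by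
    intro j
    rw [← hlin, hg, hB0]
  have hSj : ∀ j, g j = ∑ i, g i := by
    intro j
    have h := h0 j
    rw [← Finset.add_sum_erase _ _ (Finset.mem_univ j)] at h
    rw [hG, if_pos rfl, mul_zero, zero_add] at h
    rw [Finset.sum_congr rfl (fun i hi => by
      rw [hG, if_neg (Finset.mem_erase.mp hi).1])] at h
    rw [← Finset.sum_mul, Finset.sum_erase_eq_sub (Finset.mem_univ j)] at h
    linarith
  have hS : (∑ i, g i) = 0 := by
    have h := Finset.sum_congr rfl fun j (_ : j ∈ (Finset.univ : Finset (Fin (n+1)))) => hSj j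
    rw [Finset.sum_const, Finset.card_univ, Fintype.card_fin, nsmul_eq_mul] at h
    have hn' : (1:ℝ) ≤ n := by exact_mod_cast hn
    push_cast at h
    have h2 : (n:ℝ) * (∑ i, g i) = 0 := by linear_combination -h
    have hnn : (n:ℝ) ≠ 0 := Nat.cast_ne_zero.mpr (by omega)
    exact (mul_eq_zero.mp h2).resolve_left hnn
  intro i
  rw [hSj i, hS]
end

section
/- Let V be a real vector space with a symmetric bilinear form B, and let a₁, …, a_{n+1} (n ≥ 1) be a positively correlated null family (B(aᵢ,aᵢ) = 0, B(aᵢ,aⱼ) = 1/2 for i ≠ j). For each i define the reciprocal vector aⁱ := (2/n)·( (Σ_{k ≠ i} a_k) − (n−1)·aᵢ ). Then B(aⁱ, aⱼ) = δᵢⱼ for all i, j (that is, a¹, …, a^{n+1} is the reciprocal frame of a₁, …, a_{n+1}). This is the algebraic content of the gradient decomposition formula ∇ = (2/n)(∨∇ − (n−1)∇̂). -/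
/-!
Summing the Gram relations gives `B(∑ₖ aₖ, aⱼ) = n/2` for every `j`, so the dual sum satisfies
`B(∨aᵢ, aⱼ) = n/2 - B(aᵢ, aⱼ)`. Hence `B(∨aᵢ - (n-1)aᵢ, aⱼ) = n/2 - n·B(aᵢ, aⱼ)`, which is `n/2`
for `i = j` and `0` otherwise.
-/

open Finset

namespace LinearMap.BilinForm

variable {K V ι : Type*} [Field K] [AddCommGroup V] [Module K V] [DecidableEq ι]

def IsPosCorrNullFamily (B : LinearMap.BilinForm K V) (a : ι → V) : Prop :=
  ∀ i j, B (a i) (a j) = if i = j then 0 else 1 / 2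

theorem isPosCorrNullFamily_of_null_of_corr {B : LinearMap.BilinForm K V} {a : ι → V}
    (hnull : ∀ i, B (a i) (a i) = 0) (hcorr : ∀ i j, i ≠ j → B (a i) (a j) = 1 / 2) :
    B.IsPosCorrNullFamily a := by
  intro i j
  split_ifs with hij
  · exact hij ▸ hnull i
  · exact hcorr i j hij

namespace IsPosCorrNullFamily

variable [Fintype ι] {B : LinearMap.BilinForm K V} {a : ι → V}

theorem sum_apply (h : B.IsPosCorrNullFamily a) (j : ι) :
    ∑ k, B (a k) (a j) = ((Fintype.card ι : K) - 1) / 2 := by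
  rw [← add_sum_erase _ _ (mem_univ j), h j j, if_pos rfl, zero_add,
    sum_congr rfl fun k hk => (h k j).trans (if_neg (ne_of_mem_erase hk)), sum_const,
    card_erase_of_mem (mem_univ j), card_univ, nsmul_eq_mul,
    Nat.cast_pred (Fintype.card_pos_iff.mpr ⟨j⟩)]
  ring

theorem sum_erase_apply (h : B.IsPosCorrNullFamily a) (i j : ι) :
    ∑ k ∈ univ.erase i, B (a k) (a j) = ((Fintype.card ι : K) - 1) / 2 - B (a i) (a j) := by
  rw [sum_erase_eq_sub (mem_univ i), h.sum_apply]

theorem apply_reciprocal [CharZero K] (h : B.IsPosCorrNullFamily a) {n : ℕ} (hn : n ≠ 0)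
    (hcard : Fintype.card ι = n + 1) (i j : ι) :
    B ((2 / (n : K)) • ((∑ k ∈ univ.erase i, a k) - ((n : K) - 1) • a i)) (a j) =
      if i = j then 1 else 0 := by
  simp only [map_smul, map_sub, map_sum, LinearMap.smul_apply, LinearMap.sub_apply,
    LinearMap.sum_apply, smul_eq_mul]
  rw [h.sum_erase_apply, h i j, hcard]
  have hn' : (n : K) ≠ 0 := Nat.cast_ne_zero.mpr hn
  split_ifs <;> field_simp <;> push_cast <;> ring

end IsPosCorrNullFamily

end LinearMap.BilinForm

theorem stmt_6_general {V : Type*} [AddCommGroup V] [Module ℝ V]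
    (B : LinearMap.BilinForm ℝ V)
    (n : ℕ) (hn : 1 ≤ n) (a : Fin (n + 1) → V)
    (hnull : ∀ i, B (a i) (a i) = 0)
    (hcorr : ∀ i j, i ≠ j → B (a i) (a j) = 1 / 2)
    (r : Fin (n + 1) → V)
    (hr : ∀ i, r i = (2 / (n : ℝ)) •
      ((∑ k ∈ Finset.univ.erase i, a k) - ((n : ℝ) - 1) • a i)) :
    ∀ i j, B (r i) (a j) = if i = j then 1 else 0 := by
  intro i j
  rw [hr i]
  exact (LinearMap.BilinForm.isPosCorrNullFamily_of_null_of_corr hnull hcorr).apply_reciprocal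
    (Nat.one_le_iff_ne_zero.mp hn) (Fintype.card_fin _) i j

/-- for a positively correlated null family `a₁,…,a_{n+1}` (`n ≥ 1`), the
vectors `aⁱ = (2/n)·((Σ_{k ≠ i} a_k) − (n−1)aᵢ)` form the reciprocal frame:
`B(aⁱ, aⱼ) = δᵢⱼ`. -/
theorem stmt_6 {V : Type*} [AddCommGroup V] [Module ℝ V]
    (B : LinearMap.BilinForm ℝ V) (hB : B.IsSymm)
    (n : ℕ) (hn : 1 ≤ n) (a : Fin (n + 1) → V)
    (hnull : ∀ i, B (a i) (a i) = 0)
    (hcorr : ∀ i j, i ≠ j → B (a i) (a j) = 1 / 2)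
    (r : Fin (n + 1) → V)
    (hr : ∀ i, r i = (2 / (n : ℝ)) •
      ((∑ k ∈ Finset.univ.erase i, a k) - ((n : ℝ) - 1) • a i)) :
    ∀ i j, B (r i) (a j) = if i = j then 1 else 0 :=
  stmt_6_general B n hn a hnull hcorr r hr
end

section
/- Let V be a real vector space and a₁, …, a_{n+1} arbitrary elements of V (n ≥ 1). Define e₁ := a₁ + a₂, f₁ := a₁ − a₂, and for 2 ≤ k ≤ n, f_k := −√(2/(k(k−1))) · (a₁ + ⋯ + a_k − (k−1)·a_{k+1}). Then in the exterior algebra Λ(V), e₁ ∧ f₁ ∧ f₂ ∧ ⋯ ∧ f_n = −( (√2)^{n+1} / √n ) · a₁ ∧ a₂ ∧ ⋯ ∧ a_{n+1}. -/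
/-!
Induct on the number of factors. The first two give `(a₀ + a₁) ∧ (a₀ - a₁) = -2 a₀ ∧ a₁`. Wedging
`a₀ ∧ ⋯ ∧ a_{k-1}` with `f_k` kills the multiple of `a₀ + ⋯ + a_{k-1}`, since each of its terms
already occurs in the product; only `√(2/(k(k-1))) (k-1) a_k` survives, and this factor turns
`√2^k/√(k-1)` into `√2^(k+1)/√k`.
-/

namespace ExteriorAlgebra

variable {R M : Type*} [CommRing R] [AddCommGroup M] [Module R M]

theorem prod_ofFn_ι_mul_ι_self {k : ℕ} (v : Fin k → M) (i : Fin k) :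
    (List.ofFn fun j => ι R (v j)).prod * ι R (v i) = 0 := by
  have h := (ιMulti R (k + 1)).map_eq_zero_of_eq (Fin.snoc v (v i))
    (i := i.castSucc) (j := Fin.last k) (by simp) (Fin.castSucc_lt_last i).ne
  rw [ιMulti_apply, List.ofFn_succ'] at h
  simpa using h

theorem prod_ofFn_ι_mul_ι_sum_range (v : ℕ → M) (k : ℕ) :
    (List.ofFn fun j : Fin k => ι R (v j)).prod * ι R (∑ j ∈ Finset.range k, v j) = 0 := by
  rw [← Fin.sum_univ_eq_sum_range, map_sum, Finset.mul_sum]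
  exact Finset.sum_eq_zero fun j _ => prod_ofFn_ι_mul_ι_self (fun i : Fin k => v i) j

theorem ι_add_mul_ι_sub (x y : M) : ι R (x + y) * ι R (x - y) = (-2 : R) • (ι R x * ι R y) := by
  have hswap : ι R y * ι R x = -(ι R x * ι R y) := eq_neg_of_add_eq_zero_right (ι_add_mul_swap x y)
  simp only [map_add, map_sub, add_mul, mul_sub, ι_sq_zero, hswap]
  module

theorem prod_ofFn_ι_mul_ι_smul_sum_range_sub (v : ℕ → M) (k : ℕ) (c t : R) :
    (List.ofFn fun j : Fin (k + 1) => ι R (v j)).prod *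
        ι R (c • ((∑ j ∈ Finset.range (k + 1), v j) - t • v (k + 1))) =
      (-(c * t)) • (List.ofFn fun j : Fin (k + 2) => ι R (v j)).prod := by
  rw [List.ofFn_succ' (n := k + 1), List.prod_concat, map_smul, map_sub, mul_smul_comm, mul_sub,
    prod_ofFn_ι_mul_ι_sum_range, map_smul, mul_smul_comm, zero_sub, ← neg_smul, smul_smul]
  simp

end ExteriorAlgebra

theorem Real.div_sqrt_mul_sqrt_two_div_mul_self (r : ℝ) {x : ℝ} (hx : 0 < x) :
    r / √x * (√(2 / ((x + 1) * x)) * x) = r * √2 / √(x + 1) := by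
  have hsx : 0 < √x := Real.sqrt_pos.2 hx
  have hsx1 : 0 < √(x + 1) := Real.sqrt_pos.2 (by linarith)
  rw [Real.sqrt_div zero_le_two, Real.sqrt_mul (by linarith)]
  field_simp
  rw [Real.sq_sqrt hx.le]

open ExteriorAlgebra in
/-- Up to the factor `-√2`, the `f k` for `k ≥ 2` are the Helmert vectors in the `b j`. -/
theorem ι_mul_prod_ofFn_ι_helmert {V : Type*} [AddCommGroup V] [Module ℝ V]
    (b f : ℕ → V) (e : V) (N : ℕ) (he : e = b 0 + b 1) (hf1 : f 1 = b 0 - b 1)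
    (hfk : ∀ k, 2 ≤ k → k ≤ N →
      f k = (-√(2 / ((k : ℝ) * ((k : ℝ) - 1)))) •
        ((∑ j ∈ Finset.range k, b j) - ((k : ℝ) - 1) • b k))
    {m : ℕ} (hm : 1 ≤ m) (hmN : m ≤ N) :
    ι ℝ e * (List.ofFn fun k : Fin m => ι ℝ (f (k + 1))).prod =
      (-(√2 ^ (m + 1) / √m)) • (List.ofFn fun i : Fin (m + 1) => ι ℝ (b i)).prod := by
  induction m, hm using Nat.le_induction with
  | base =>
    have h2 : -(√2 ^ 2 / √(1 : ℕ)) = (-2 : ℝ) := by simp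
    simpa [he, hf1, h2] using ι_add_mul_ι_sub (R := ℝ) (b 0) (b 1)
  | succ m hm ih =>
    rw [List.ofFn_succ' (n := m), List.prod_concat]
    simp only [Fin.val_castSucc, Fin.val_last]
    rw [← mul_assoc, ih (by omega), smul_mul_assoc, hfk (m + 1) (by omega) hmN,
      prod_ofFn_ι_mul_ι_smul_sum_range_sub, smul_smul]
    congr 1
    have hcoeff := Real.div_sqrt_mul_sqrt_two_div_mul_self (√2 ^ (m + 1)) (x := m) (by positivity)
    push_cast
    rw [add_sub_cancel_right, pow_succ _ (m + 1), ← hcoeff]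
    ring

open Fin.NatCast

/-- for arbitrary `a₁,…,a_{n+1}` in a real vector space, with
`e₁ = a₁ + a₂`, `f₁ = a₁ − a₂` and `f_k = −√(2/(k(k−1)))·(a₁ + ⋯ + a_k − (k−1)a_{k+1})`
for `2 ≤ k ≤ n`, one has in the exterior algebra
`e₁ ∧ f₁ ∧ ⋯ ∧ f_n = −((√2)^{n+1}/√n) · a₁ ∧ ⋯ ∧ a_{n+1}`. -/
theorem stmt_10 {V : Type*} [AddCommGroup V] [Module ℝ V]
    (n : ℕ) (hn : 1 ≤ n) (a : Fin (n + 1) → V)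
    (e1 : V) (he1 : e1 = a 0 + a 1)
    (f : ℕ → V) (hf1 : f 1 = a 0 - a 1)
    (hfk : ∀ k, 2 ≤ k → k ≤ n →
      f k = (-(Real.sqrt (2 / ((k : ℝ) * ((k : ℝ) - 1))))) •
        ((∑ j ∈ Finset.range k, a (j : Fin (n + 1))) - ((k : ℝ) - 1) • a (k : Fin (n + 1)))) :
    ExteriorAlgebra.ι ℝ e1 *
        (List.ofFn fun k : Fin n => ExteriorAlgebra.ι ℝ (f ((k : ℕ) + 1))).prod =
      (-(Real.sqrt 2 ^ (n + 1) / Real.sqrt n)) •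
        (List.ofFn fun i : Fin (n + 1) => ExteriorAlgebra.ι ℝ (a i)).prod := by
  have h := ι_mul_prod_ofFn_ι_helmert (fun j => a j) f e1 n
    (by simpa using he1) (by simpa using hf1) hfk hn le_rfl
  simpa only [Fin.cast_val_eq_self] using h
end

section
/- Let Q₃ be the quadratic form on ℝ³ given by Q₃(x) = x₁x₂ + x₂x₃ + x₃x₁, and let ι : ℝ³ → Cl(Q₃) be the canonical embedding; the standard basis vectors u₁, u₂, u₃ are null and pairwise satisfy ι(uᵢ)ι(uⱼ) + ι(uⱼ)ι(uᵢ) = 1 for i ≠ j. Let ω := (1/6)·Σ_{σ ∈ S₃} sgn(σ)·ι(u_{σ(1)})ι(u_{σ(2)})ι(u_{σ(3)}) be the trivector a₁∧a₂∧a₃. Then the element i := −2ω commutes with ι(uₖ) for k = 1, 2, 3 (hence lies in the center of Cl(Q₃)), and i² = −1. -/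
/-!
Write `a, b, c` for `ι u₁, ι u₂, ι u₃`. The Clifford relations `a² = b² = c² = 0` and
`ab + ba = bc + cb = ac + ca = 1` reorder every word in `a, b, c` into a combination of
`1, a, b, c, ab, ac, bc, abc`. Reordering the six terms of the antisymmetrized product gives
`6·a∧b∧c = 6abc - 3a + 3b - 3c`, i.e. `i = a - b + c - 2abc`, and the commutation relations and
`i² = -1` follow by reordering in the same way; so they hold in any ring containing such a triple.
-/

/-- The quadratic form `Q₃(x) = x₁x₂ + x₂x₃ + x₃x₁` on `ℝ³`. -/
noncomputable def Q3 : QuadraticForm ℝ (Fin 3 → ℝ) :=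
  Matrix.toQuadraticMap' !![0, 1, 0; 0, 0, 1; 1, 0, 0]

open Equiv CliffordAlgebra

theorem Equiv.Perm.sum_fin_three_sign_smul {M : Type*} [AddCommGroup M]
    (f : Fin 3 → Fin 3 → Fin 3 → M) :
    ∑ σ : Perm (Fin 3), (Perm.sign σ : ℤ) • f (σ 0) (σ 1) (σ 2) =
      f 0 1 2 - f 1 0 2 - f 2 1 0 - f 0 2 1 + f 1 2 0 + f 2 0 1 := by
  have huniv : (Finset.univ : Finset (Perm (Fin 3))) =
      {1, swap 0 1, swap 0 2, swap 1 2, swap 0 1 * swap 0 2, swap 0 2 * swap 0 1} := by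
    decide
  simp +decide [huniv, Perm.sign_mul, Perm.sign_swap', swap_apply_of_ne_of_ne]
  abel

section NullTriple

variable {R : Type*} [Ring R] {a b c : R}

theorem mul_mul_eq_zero_of_mul_self_eq_zero (h : a * a = 0) (x : R) : a * (a * x) = 0 := by
  rw [← mul_assoc, h, zero_mul]

theorem mul_mul_swap_of_add_swap_eq_one (h : a * b + b * a = 1) (x : R) :
    b * (a * x) = x - a * (b * x) := by
  rw [← mul_assoc, ← mul_assoc, eq_sub_of_add_eq' h, sub_mul, one_mul]

structure IsNullTriple (a b c : R) : Prop where
  mul_self_a : a * a = 0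
  mul_self_b : b * b = 0
  mul_self_c : c * c = 0
  anticomm_ab : a * b + b * a = 1
  anticomm_bc : b * c + c * b = 1
  anticomm_ac : a * c + c * a = 1

def nullTriplePseudoscalar (a b c : R) : R := a - b + c - 2 * (a * b * c)

namespace IsNullTriple

variable (h : IsNullTriple a b c)
include h

theorem alternatingSum_eq :
    a * b * c - b * a * c - c * b * a - a * c * b + b * c * a + c * a * b =
      (-3 : ℤ) • nullTriplePseudoscalar a b c := by
  simp only [nullTriplePseudoscalar, mul_assoc, two_mul, mul_sub, sub_mul, one_mul, mul_one,
    eq_sub_of_add_eq' h.anticomm_ab, eq_sub_of_add_eq' h.anticomm_bc,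
    eq_sub_of_add_eq' h.anticomm_ac, mul_mul_swap_of_add_swap_eq_one h.anticomm_ab]
  noncomm_ring

theorem commute_nullTriplePseudoscalar :
    Commute (nullTriplePseudoscalar a b c) a ∧ Commute (nullTriplePseudoscalar a b c) b ∧
      Commute (nullTriplePseudoscalar a b c) c := by
  refine ⟨?_, ?_, ?_⟩ <;>
  simp only [Commute, SemiconjBy, nullTriplePseudoscalar, mul_assoc, two_mul, mul_add, mul_sub,
    add_mul, sub_mul, mul_one, h.mul_self_a, h.mul_self_b, h.mul_self_c,
    mul_mul_eq_zero_of_mul_self_eq_zero h.mul_self_a,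
    mul_mul_eq_zero_of_mul_self_eq_zero h.mul_self_b, eq_sub_of_add_eq' h.anticomm_ab,
    eq_sub_of_add_eq' h.anticomm_bc, eq_sub_of_add_eq' h.anticomm_ac,
    mul_mul_swap_of_add_swap_eq_one h.anticomm_ab, mul_mul_swap_of_add_swap_eq_one h.anticomm_bc,
    mul_mul_swap_of_add_swap_eq_one h.anticomm_ac] <;>
  noncomm_ring

theorem nullTriplePseudoscalar_mul_self :
    nullTriplePseudoscalar a b c * nullTriplePseudoscalar a b c = -1 := by
  simp only [nullTriplePseudoscalar, mul_assoc, two_mul, mul_add, mul_sub, add_mul, sub_mul,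
    mul_one, h.mul_self_a, h.mul_self_b, h.mul_self_c,
    mul_mul_eq_zero_of_mul_self_eq_zero h.mul_self_a,
    mul_mul_eq_zero_of_mul_self_eq_zero h.mul_self_b, eq_sub_of_add_eq' h.anticomm_ab,
    eq_sub_of_add_eq' h.anticomm_bc, eq_sub_of_add_eq' h.anticomm_ac,
    mul_mul_swap_of_add_swap_eq_one h.anticomm_ab, mul_mul_swap_of_add_swap_eq_one h.anticomm_bc,
    mul_mul_swap_of_add_swap_eq_one h.anticomm_ac]
  noncomm_ring

end IsNullTriple

end NullTriple

theorem CliffordAlgebra.isNullTriple_ι {K M : Type*} [CommRing K] [AddCommGroup M] [Module K M]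
    {Q : QuadraticForm K M} {x y z : M} (hx : Q x = 0) (hy : Q y = 0) (hz : Q z = 0)
    (hxy : QuadraticMap.polar Q x y = 1) (hyz : QuadraticMap.polar Q y z = 1)
    (hxz : QuadraticMap.polar Q x z = 1) :
    IsNullTriple (ι Q x) (ι Q y) (ι Q z) where
  mul_self_a := by rw [ι_sq_scalar, hx, map_zero]
  mul_self_b := by rw [ι_sq_scalar, hy, map_zero]
  mul_self_c := by rw [ι_sq_scalar, hz, map_zero]
  anticomm_ab := by rw [ι_mul_ι_add_swap, hxy, map_one]
  anticomm_bc := by rw [ι_mul_ι_add_swap, hyz, map_one]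
  anticomm_ac := by rw [ι_mul_ι_add_swap, hxz, map_one]

theorem Q3_apply (x : Fin 3 → ℝ) : Q3 x = x 0 * x 1 + x 1 * x 2 + x 2 * x 0 := by
  change Matrix.toQuadraticForm' _ x = _
  simp [Matrix.toQuadraticForm', Matrix.toLinearMap₂'_apply, Fin.sum_univ_three]

theorem Q3_single (i : Fin 3) : Q3 (Pi.single i 1) = 0 := by
  fin_cases i <;> simp [Q3_apply]

theorem polar_Q3_single {i j : Fin 3} (hij : i ≠ j) :
    QuadraticMap.polar Q3 (Pi.single i 1) (Pi.single j 1) = 1 := by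
  fin_cases i <;> fin_cases j <;> simp_all [QuadraticMap.polar, Q3_apply]

/-- in `Cl(Q₃) ≅ G_{1,2}`, the element `i := −2·(a₁∧a₂∧a₃)`, where
`a₁∧a₂∧a₃` is the antisymmetrized product `(1/6)Σ_σ sgn(σ) ι(u_{σ1})ι(u_{σ2})ι(u_{σ3})`
of the null basis vectors `uᵢ = Pi.single i 1`, commutes with every `ι(u_k)` and
squares to `−1`. -/
theorem stmt_13
    (u : Fin 3 → (Fin 3 → ℝ)) (hu : ∀ k, u k = Pi.single k 1)
    (ω : CliffordAlgebra Q3)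
    (hω : ω = (6⁻¹ : ℝ) • ∑ σ : Equiv.Perm (Fin 3),
      ((Equiv.Perm.sign σ : ℤ) •
        (CliffordAlgebra.ι Q3 (u (σ 0)) * CliffordAlgebra.ι Q3 (u (σ 1)) *
          CliffordAlgebra.ι Q3 (u (σ 2)))))
    (I : CliffordAlgebra Q3) (hI : I = (-2 : ℝ) • ω) :
    (∀ k, I * CliffordAlgebra.ι Q3 (u k) = CliffordAlgebra.ι Q3 (u k) * I) ∧
    I * I = -1 := by
  have h : IsNullTriple (ι Q3 (u 0)) (ι Q3 (u 1)) (ι Q3 (u 2)) := by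
    simp only [hu]
    exact isNullTriple_ι (Q3_single 0) (Q3_single 1) (Q3_single 2)
      (polar_Q3_single (by decide)) (polar_Q3_single (by decide)) (polar_Q3_single (by decide))
  have hI' : I = nullTriplePseudoscalar (ι Q3 (u 0)) (ι Q3 (u 1)) (ι Q3 (u 2)) := by
    rw [hI, hω, Perm.sum_fin_three_sign_smul fun i j k => ι Q3 (u i) * ι Q3 (u j) * ι Q3 (u k),
      h.alternatingSum_eq]
    module
  obtain ⟨ha, hb, hc⟩ := h.commute_nullTriplePseudoscalar
  subst hI'
  refine ⟨fun k => ?_, h.nullTriplePseudoscalar_mul_self⟩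
  fin_cases k
  exacts [ha.eq, hb.eq, hc.eq]
end
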